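/- The set of ST-antivalid inferences equals the relative sum of the K3-antivalid inferences and the LP-antivalid inferences: 𝕊𝕋⁻ = 𝕂₃⁻ † 𝕃ℙ⁻. That is, an inference Γ ⇒ Δ is ST-antivalid if and only if for every formula φ, either Γ ⇒ {φ} is K3-antivalid or {φ} ⇒ Δ is LP-antivalid. -/

import Mathlib

/-- Propositional formulas over a countably infinite set of variables,
with constants ⊤, ⊥, λ and connectives ¬, ∨, ∧. -/
inductive Fm : Type
  | var : ℕ → Fm
  | top : Fm
  | bot : Fm
  | lam : Fm
  | neg : Fm → Fm
  | disj : Fm → Fm → Fm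
  | conj : Fm → Fm → Fm
  deriving DecidableEq

/-- A function `v : Var → ℚ` is an SK-valuation if it takes values in {0, 1/2, 1}. -/
def SK (v : ℕ → ℚ) : Prop := ∀ p : ℕ, v p = 0 ∨ v p = 1/2 ∨ v p = 1

/-- Extension of a valuation to all formulas by the Strong Kleene scheme. -/
def eval (v : ℕ → ℚ) : Fm → ℚ
  | .var p => v p
  | .top => 1
  | .bot => 0
  | .lam => 1/2
  | .neg φ => 1 - eval v φ
  | .disj φ ψ => max (eval v φ) (eval v ψ)
  | .conj φ ψ => min (eval v φ) (eval v ψ)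

/-- An inference is a pair of finite sets of formulas. -/
abbrev Inference := Finset Fm × Finset Fm

def K3Valid (Γ Δ : Finset Fm) : Prop :=
  ∀ v : ℕ → ℚ, SK v → (∀ γ ∈ Γ, eval v γ = 1) → ∃ δ ∈ Δ, eval v δ = 1

def LPValid (Γ Δ : Finset Fm) : Prop :=
  ∀ v : ℕ → ℚ, SK v → (∀ γ ∈ Γ, eval v γ ≠ 0) → ∃ δ ∈ Δ, eval v δ ≠ 0

def STValid (Γ Δ : Finset Fm) : Prop :=
  ∀ v : ℕ → ℚ, SK v → (∀ γ ∈ Γ, eval v γ = 1) → ∃ δ ∈ Δ, eval v δ ≠ 0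

def TSValid (Γ Δ : Finset Fm) : Prop :=
  ∀ v : ℕ → ℚ, SK v → (∀ γ ∈ Γ, eval v γ ≠ 0) → ∃ δ ∈ Δ, eval v δ = 1

def K3plus : Set Inference := {I | K3Valid I.1 I.2}
def LPplus : Set Inference := {I | LPValid I.1 I.2}
def STplus : Set Inference := {I | STValid I.1 I.2}
def TSplus : Set Inference := {I | TSValid I.1 I.2}

/-- Relative product: the middle term is a single formula. -/
def RelProd (R S : Set Inference) : Set Inference :=
  {I | ∃ φ : Fm, (I.1, ({φ} : Finset Fm)) ∈ R ∧ (({φ} : Finset Fm), I.2) ∈ S}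

/-- Relative sum: for every single formula, one of the two components holds. -/
def RelSum (R S : Set Inference) : Set Inference :=
  {I | ∀ φ : Fm, (I.1, ({φ} : Finset Fm)) ∈ R ∨ (({φ} : Finset Fm), I.2) ∈ S}

def K3Antivalid (Γ Δ : Finset Fm) : Prop :=
  ∀ v : ℕ → ℚ, SK v → (∀ γ ∈ Γ, eval v γ ≠ 1) → ∃ δ ∈ Δ, eval v δ ≠ 1

def LPAntivalid (Γ Δ : Finset Fm) : Prop :=
  ∀ v : ℕ → ℚ, SK v → (∀ γ ∈ Γ, eval v γ = 0) → ∃ δ ∈ Δ, eval v δ = 0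

def STAntivalid (Γ Δ : Finset Fm) : Prop :=
  ∀ v : ℕ → ℚ, SK v → (∀ γ ∈ Γ, eval v γ ≠ 1) → ∃ δ ∈ Δ, eval v δ = 0

def TSAntivalid (Γ Δ : Finset Fm) : Prop :=
  ∀ v : ℕ → ℚ, SK v → (∀ γ ∈ Γ, eval v γ = 0) → ∃ δ ∈ Δ, eval v δ ≠ 1

def K3minus : Set Inference := {I | K3Antivalid I.1 I.2}
def LPminus : Set Inference := {I | LPAntivalid I.1 I.2}
def STminus : Set Inference := {I | STAntivalid I.1 I.2}
def TSminus : Set Inference := {I | TSAntivalid I.1 I.2}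


/-! ST-antivalidity splits along the informational meet of valuations, which sends every
variable on which two valuations disagree to `1/2`. Strong Kleene evaluation is monotone in the
information order, so if `v₁` makes every formula of `Γ` untrue then so does its meet with any
`v₂`, and a formula of `Δ` that the meet makes false is false under `v₂`. Hence a valuation
refuting the K3-antivalidity of `Γ ⇒ φ` forces every valuation to falsify some formula of `Δ`,
which is the LP-antivalidity of `φ ⇒ Δ`. Conversely, cut on a variable `q` fresh for `Γ ∪ Δ`:
a valuation making `Γ` untrue, updated by `q ↦ 1`, refutes the K3-antivalidity of `Γ ⇒ q`, so
`q ⇒ Δ` is LP-antivalid, and the update `q ↦ 0` yields a formula of `Δ` false under the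
original valuation.
-/

def Fm.vars : Fm → Finset ℕ
  | .var p => {p}
  | .top | .bot | .lam => ∅
  | .neg φ => φ.vars
  | .disj φ ψ | .conj φ ψ => φ.vars ∪ ψ.vars

lemma eval_update_of_notMem_vars {v : ℕ → ℚ} {q : ℕ} (a : ℚ) {φ : Fm} (hq : q ∉ φ.vars) :
    eval (Function.update v q a) φ = eval v φ := by
  induction φ with
  | var p => simp_all [Fm.vars, eval, Function.update, eq_comm]
  | _ => simp_all [Fm.vars, eval]

lemma SK.update {v : ℕ → ℚ} (hv : SK v) (q : ℕ) {a : ℚ} (ha : a = 0 ∨ a = 1/2 ∨ a = 1) :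
    SK (Function.update v q a) := by
  intro p
  rcases eq_or_ne p q with rfl | hp
  · simpa using ha
  · simpa [hp] using hv p

lemma eval_eq_zero_or_half_or_one {v : ℕ → ℚ} (hv : SK v) (φ : Fm) :
    eval v φ = 0 ∨ eval v φ = 1/2 ∨ eval v φ = 1 := by
  induction φ with
  | var p => exact hv p
  | neg φ ih => rcases ih with h | h | h <;> norm_num [eval, h]
  | disj φ ψ ih₁ ih₂ | conj φ ψ ih₁ ih₂ =>
    rcases ih₁ with h | h | h <;> rcases ih₂ with g | g | g <;> simp [eval, h, g] <;> norm_num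
  | _ => simp [eval]

def InfoLE (a b : ℚ) : Prop := a = 1/2 ∨ a = b

lemma InfoLE.one_sub {a b : ℚ} (h : InfoLE a b) : InfoLE (1 - a) (1 - b) := by
  rcases h with rfl | rfl
  · left; norm_num
  · right; rfl

lemma InfoLE.eq_one {a b : ℚ} (h : InfoLE a b) (ha : a = 1) : b = 1 := by
  rcases h with rfl | rfl
  · norm_num at ha
  · exact ha

lemma InfoLE.eq_zero {a b : ℚ} (h : InfoLE a b) (ha : a = 0) : b = 0 := by
  rcases h with rfl | rfl
  · norm_num at ha
  · exact ha

lemma InfoLE.max {a b c d : ℚ} (hab : InfoLE a b) (hcd : InfoLE c d)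
    (hb : b = 0 ∨ b = 1/2 ∨ b = 1) (hd : d = 0 ∨ d = 1/2 ∨ d = 1) :
    InfoLE (max a c) (max b d) := by
  rcases hab with rfl | rfl <;> rcases hcd with rfl | rfl <;>
    rcases hb with rfl | rfl | rfl <;> rcases hd with rfl | rfl | rfl <;> norm_num [InfoLE]

lemma InfoLE.min {a b c d : ℚ} (hab : InfoLE a b) (hcd : InfoLE c d)
    (hb : b = 0 ∨ b = 1/2 ∨ b = 1) (hd : d = 0 ∨ d = 1/2 ∨ d = 1) :
    InfoLE (min a c) (min b d) := by
  rcases hab with rfl | rfl <;> rcases hcd with rfl | rfl <;>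
    rcases hb with rfl | rfl | rfl <;> rcases hd with rfl | rfl | rfl <;> norm_num [InfoLE]

lemma infoLE_eval {v w : ℕ → ℚ} (hw : SK w) (hvw : ∀ p, InfoLE (v p) (w p)) (φ : Fm) :
    InfoLE (eval v φ) (eval w φ) := by
  induction φ with
  | var p => exact hvw p
  | neg φ ih => exact ih.one_sub
  | disj φ ψ ih₁ ih₂ =>
    exact ih₁.max ih₂ (eval_eq_zero_or_half_or_one hw φ) (eval_eq_zero_or_half_or_one hw ψ)
  | conj φ ψ ih₁ ih₂ =>
    exact ih₁.min ih₂ (eval_eq_zero_or_half_or_one hw φ) (eval_eq_zero_or_half_or_one hw ψ)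
  | _ => right; rfl

noncomputable def infoMeet (v w : ℕ → ℚ) (p : ℕ) : ℚ :=
  if v p = w p then v p else 1/2

lemma infoLE_infoMeet_left (v w : ℕ → ℚ) (p : ℕ) : InfoLE (infoMeet v w p) (v p) := by
  unfold infoMeet; split_ifs <;> simp [InfoLE]

lemma infoLE_infoMeet_right (v w : ℕ → ℚ) (p : ℕ) : InfoLE (infoMeet v w p) (w p) := by
  unfold infoMeet; split_ifs with h <;> simp [InfoLE, h]

lemma SK.infoMeet {v : ℕ → ℚ} (hv : SK v) (w : ℕ → ℚ) : SK (infoMeet v w) := by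
  intro p
  rcases infoLE_infoMeet_left v w p with h | h
  · exact Or.inr (Or.inl h)
  · exact h ▸ hv p

lemma STAntivalid.exists_eval_eq_zero {Γ Δ : Finset Fm} (h : STAntivalid Γ Δ)
    {v₁ v₂ : ℕ → ℚ} (hv₁ : SK v₁) (hΓ : ∀ γ ∈ Γ, eval v₁ γ ≠ 1) (hv₂ : SK v₂) :
    ∃ δ ∈ Δ, eval v₂ δ = 0 := by
  have mono₁ := infoLE_eval hv₁ (infoLE_infoMeet_left v₁ v₂)
  have mono₂ := infoLE_eval hv₂ (infoLE_infoMeet_right v₁ v₂)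
  obtain ⟨δ, hδ, hδ0⟩ := h _ (hv₁.infoMeet v₂) fun γ hγ hγ1 => hΓ γ hγ ((mono₁ γ).eq_one hγ1)
  exact ⟨δ, hδ, (mono₂ δ).eq_zero hδ0⟩

lemma K3Antivalid_or_LPAntivalid_of_STAntivalid {Γ Δ : Finset Fm} (h : STAntivalid Γ Δ)
    (φ : Fm) : K3Antivalid Γ {φ} ∨ LPAntivalid {φ} Δ := by
  by_cases hK : K3Antivalid Γ {φ}
  · exact .inl hK
  · obtain ⟨v₁, hv₁, hΓ, -⟩ : ∃ v₁, SK v₁ ∧ (∀ γ ∈ Γ, eval v₁ γ ≠ 1) ∧ eval v₁ φ = 1 := by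
      simpa [K3Antivalid] using hK
    exact .inr fun v₂ hv₂ _ => h.exists_eval_eq_zero hv₁ hΓ hv₂

lemma STAntivalid_of_forall_K3Antivalid_or_LPAntivalid {Γ Δ : Finset Fm}
    (h : ∀ φ, K3Antivalid Γ {φ} ∨ LPAntivalid {φ} Δ) : STAntivalid Γ Δ := by
  intro v hv hΓ
  obtain ⟨q, hq⟩ := Infinite.exists_notMem_finset ((Γ ∪ Δ).biUnion Fm.vars)
  have fresh : ∀ ψ ∈ Γ ∪ Δ, q ∉ ψ.vars := fun ψ hψ hqψ => hq (Finset.mem_biUnion.2 ⟨ψ, hψ, hqψ⟩)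
  rcases h (.var q) with hK | hL
  · obtain ⟨δ, hδ, hδ1⟩ := hK (Function.update v q 1) (hv.update q (by norm_num)) fun γ hγ => by
      rw [eval_update_of_notMem_vars _ (fresh γ (Finset.mem_union_left _ hγ))]
      exact hΓ γ hγ
    rw [Finset.mem_singleton] at hδ
    subst hδ
    simp [eval] at hδ1
  · obtain ⟨δ, hδ, hδ0⟩ := hL (Function.update v q 0) (hv.update q (by norm_num)) (by simp [eval])
    rw [eval_update_of_notMem_vars _ (fresh δ (Finset.mem_union_right _ hδ))] at hδ0
    exact ⟨δ, hδ, hδ0⟩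

theorem STminus_eq_relSum_K3minus_LPminus : STminus = RelSum K3minus LPminus := by
  ext ⟨Γ, Δ⟩
  exact ⟨K3Antivalid_or_LPAntivalid_of_STAntivalid,
    STAntivalid_of_forall_K3Antivalid_or_LPAntivalid⟩
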